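/- (Theorem 1(i)) For a chemical reaction system Q = (X, R, C) with food set F and inhibition pairs (X_1, R_1), …, (X_k, R_k): for any subset J of [k], if s(R^J ∩ R_J) is nonempty, then s(R^J ∩ R_J) is a u-RAF. -/
import Mathlib


/-- A chemical reaction system over molecule types `M` and reactions `R`:
each reaction has a finite set of reactants and products, and `catal x r`
means molecule x catalyzes reaction r. -/
structure CRS (M R : Type*) where
  reactants : R → Finset M
  products : R → Finset M
  catal : M → R → Prop

/-- cl_A(F): the smallest set W ⊇ F such that for every r ∈ A with ρ(r) ⊆ W,
π(r) ⊆ W. -/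
def clo {M R : Type*} (Q : CRS M R) (F : Set M) (A : Set R) : Set M :=
  ⋂₀ {W : Set M | F ⊆ W ∧
    ∀ r ∈ A, (↑(Q.reactants r) : Set M) ⊆ W → (↑(Q.products r) : Set M) ⊆ W}

/-- R' is an RAF: nonempty, each reaction is catalyzed by some molecule in the closure
of the food set under R', and all its reactants lie in that closure. -/
def IsRAF {M R : Type*} (Q : CRS M R) (F : Set M) (R' : Set R) : Prop :=
  R'.Nonempty ∧ ∀ r ∈ R',
    (∃ x ∈ clo Q F R', Q.catal x r) ∧ (↑(Q.reactants r) : Set M) ⊆ clo Q F R'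

/-- supp(r) = ρ(r) ∪ π(r). -/
def suppr {M R : Type*} (Q : CRS M R) (r : R) : Set M :=
  (↑(Q.reactants r) : Set M) ∪ (↑(Q.products r) : Set M)

/-- supp(R') = ∪_{r ∈ R'} (ρ(r) ∪ π(r)). -/
def suppR {M R : Type*} (Q : CRS M R) (R' : Set R) : Set M :=
  ⋃ r ∈ R', suppr Q r

/-- Condition (u-2): for every i, if R' meets R_i then supp(R') avoids X_i. -/
def CondU2 {M R : Type*} {k : ℕ} (Q : CRS M R)
    (Xi : Fin k → Set M) (Ri : Fin k → Set R) (R' : Set R) : Prop :=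
  ∀ i : Fin k, (R' ∩ Ri i).Nonempty → suppR Q R' ∩ Xi i = ∅

/-- A u-RAF is an RAF satisfying condition (u-2). -/
def IsURAF {M R : Type*} {k : ℕ} (Q : CRS M R) (F : Set M)
    (Xi : Fin k → Set M) (Ri : Fin k → Set R) (R' : Set R) : Prop :=
  IsRAF Q F R' ∧ CondU2 Q Xi Ri R'

/-- R^J = {r ∈ R : supp(r) ∩ X_j = ∅ for all j ∉ J}. -/
def RupJ {M R : Type*} {k : ℕ} (Q : CRS M R) (Xi : Fin k → Set M)
    (J : Set (Fin k)) : Set R :=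
  {r | ∀ j ∉ J, suppr Q r ∩ Xi j = ∅}

/-- R_J = {r ∈ R : r ∉ R_j for all j ∈ J}. -/
def RdownJ {R : Type*} {k : ℕ} (Ri : Fin k → Set R) (J : Set (Fin k)) : Set R :=
  {r | ∀ j ∈ J, r ∉ Ri j}

/-- s(R*): the union of all RAFs contained in R* (the maximal RAF within R*,
or ∅ if none exists). -/
def sMax {M R : Type*} (Q : CRS M R) (F : Set M) (Rs : Set R) : Set R :=
  ⋃₀ {A : Set R | A ⊆ Rs ∧ IsRAF Q F A}


lemma clo_mono {M R : Type*} (Q : CRS M R) (F : Set M) {A B : Set R} (hAB : A ⊆ B) :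
    clo Q F A ⊆ clo Q F B := by
  intro x hx
  simp only [clo, Set.mem_sInter, Set.mem_setOf_eq] at hx ⊢
  intro W hW
  exact hx W ⟨hW.1, fun r hr => hW.2 r (hAB hr)⟩

/-- (Theorem 1(i)) For any J ⊆ [k], if s(R^J ∩ R_J) is nonempty then it is a u-RAF. -/
theorem sMax_RJ_is_uRAF {M R : Type*} [Fintype M] [Fintype R] {k : ℕ}
    (Q : CRS M R) (F : Set M) (Xi : Fin k → Set M) (Ri : Fin k → Set R)
    (J : Set (Fin k)) (h : (sMax Q F (RupJ Q Xi J ∩ RdownJ Ri J)).Nonempty) :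
    IsURAF Q F Xi Ri (sMax Q F (RupJ Q Xi J ∩ RdownJ Ri J)) := by
  set Rs := RupJ Q Xi J ∩ RdownJ Ri J with hRs
  have hsub : sMax Q F Rs ⊆ Rs := by
    rintro r ⟨A, ⟨hA, _⟩, hrA⟩
    exact hA hrA
  constructor
  · refine ⟨h, ?_⟩
    rintro r ⟨A, ⟨hA, hRAF⟩, hrA⟩
    have hAsub : A ⊆ sMax Q F Rs := fun s hs => ⟨A, ⟨hA, hRAF⟩, hs⟩
    have hclo := clo_mono Q F hAsub
    obtain ⟨⟨x, hx, hcat⟩, hre⟩ := hRAF.2 r hrA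
    exact ⟨⟨x, hclo hx, hcat⟩, hre.trans hclo⟩
  · rintro i ⟨r, hr, hri⟩
    have hiJ : i ∉ J := fun hiJ => (hsub hr).2 i hiJ hri
    rw [Set.eq_empty_iff_forall_notMem]
    rintro x ⟨hxs, hxX⟩
    obtain ⟨s, hs, hxsup⟩ := Set.mem_iUnion₂.mp hxs
    have := (hsub hs).1 i hiJ
    rw [Set.eq_empty_iff_forall_notMem] at this
    exact this x ⟨hxsup, hxX⟩
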